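/- Let X and X̃ be real-valued processes with X_t(ω) > 0 and X̃_t(ω) > 0 for all t, ω, whose paths of X are càdlàg, and suppose X and X̃ are ε-close for some ε > 0, i.e. 1/(1+ε) ≤ X̃_t/X_t ≤ 1+ε a.s. for all t ≥ 0. Let τ : Ω → [0,∞] be measurable, let σ_n ≤ τ_n be bounded stopping times with (σ_n) nondecreasing, σ_n → τ and τ_n → τ a.s., and with σ_n < τ a.s. on {τ < ∞}; let ξ_n be 𝓕_{σ_n}-measurable with sup_n |ξ_n| ≤ k a.s. for a constant k and ξ_n → ξ a.s. Assume that almost surely, for every t ≥ 0, ξ_n·(X_{τ_n∧t} − X_{σ_n∧t}) → c·1_{τ≤t} for a constant c > 0, and that X_{τ−} ≤ N a.s. on {τ < ∞} for a constant N > 0. Then, almost surely, for every t ≥ 0: liminf_n ξ_n·(X̃_{τ_n∧t} − X̃_{σ_n∧t}) ≥ (c/(1+ε) − 2εkN)·1_{τ≤t}, and on {τ > t} the gains ξ_n·(X̃_{τ_n∧t} − X̃_{σ_n∧t}) converge to 0; in particular, for ε small enough the limiting profit remains bounded below by a strictly positive constant on {τ ≤ t} (constant profits via flash strategies are robust to small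 proportional transaction costs). -/

import Mathlib

/-!
Write `r = 1 + ε`. Pointwise, `X̃ ∈ [r⁻¹ X, r X]` traps the `X̃`-gain `ξ (X̃_b - X̃_a)` of each
trade between `min(r⁻¹ G, r G) - (r - r⁻¹) k X_a` and `max(r⁻¹ G, r G) + (r - r⁻¹) k X_a`, where
`G = ξ (X_b - X_a)` is the `X`-gain. On `{τ ≤ t}` we have `σₙ → τ` from below, so `X_{σₙ ∧ t} → X_{τ-}`
and `G → c`; both bounds converge, and the liminf of the `X̃`-gains is at least
`c / r - (r - r⁻¹) k X_{τ-} ≥ c / (1 + ε) - 2 ε k N`. On `{t < τ}` eventually `t ≤ σₙ ≤ τₙ`, so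
the gains vanish.
-/

open MeasureTheory Filter Set
open scoped NNReal ENNReal Topology

theorem min_sub_le_mul_sub_of_mem_Icc {r δ ξ k x y x' y' : ℝ} (hδ : r - r⁻¹ ≤ δ) (hx : 0 ≤ x)
    (hξ : |ξ| ≤ k) (hx' : x' ∈ Icc (r⁻¹ * x) (r * x)) (hy' : y' ∈ Icc (r⁻¹ * y) (r * y)) :
    min (r⁻¹ * (ξ * (y - x))) (r * (ξ * (y - x))) - δ * k * x ≤ ξ * (y' - x') := by
  obtain ⟨hξl, hξu⟩ := abs_le.mp hξ
  have hδx : (r - r⁻¹) * x ≤ δ * x := mul_le_mul_of_nonneg_right hδ hx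
  have hD : 0 ≤ (r - r⁻¹) * x := by nlinarith [hx'.1.trans hx'.2]
  rcases le_total 0 ξ with hξ0 | hξ0
  · have hy := mul_le_mul_of_nonneg_left hy'.1 hξ0
    have hx := mul_le_mul_of_nonneg_left hx'.2 hξ0
    nlinarith [min_le_left (r⁻¹ * (ξ * (y - x))) (r * (ξ * (y - x))),
      mul_le_mul_of_nonneg_right hξu (hD.trans hδx), mul_le_mul_of_nonneg_left hδx hξ0]
  · have hy := mul_le_mul_of_nonpos_left hy'.2 hξ0
    have hx := mul_le_mul_of_nonpos_left hx'.1 hξ0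
    nlinarith [min_le_right (r⁻¹ * (ξ * (y - x))) (r * (ξ * (y - x))),
      mul_le_mul_of_nonneg_right hξl (hD.trans hδx), mul_le_mul_of_nonpos_left hδx hξ0]

theorem one_add_sub_inv_le {ε : ℝ} (hε : 0 ≤ ε) : 1 + ε - (1 + ε)⁻¹ ≤ 2 * ε := by
  have h : (1 + ε) * (1 + ε)⁻¹ = 1 := mul_inv_cancel₀ (by positivity)
  nlinarith [inv_pos.2 (show 0 < 1 + ε by positivity)]

theorem mem_Icc_of_div_mem_Icc {r x y : ℝ} (hx : 0 < x) (h : 1 / r ≤ y / x ∧ y / x ≤ r) :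
    y ∈ Icc (r⁻¹ * x) (r * x) := by
  rwa [le_div_iff₀ hx, div_le_iff₀ hx, one_div] at h

/-- Without the upper bound `u`, `liminf g` could be the junk value of an unbounded sequence. -/
theorem le_liminf_of_tendsto_of_le_of_le {ι α : Type*} [ConditionallyCompleteLinearOrder α]
    [TopologicalSpace α] [OrderTopology α] {f : Filter ι} [NeBot f] {l g u : ι → α} {a b : α}
    (hl : Tendsto l f (𝓝 a)) (hu : Tendsto u f (𝓝 b)) (hlg : ∀ᶠ i in f, l i ≤ g i)
    (hgu : ∀ᶠ i in f, g i ≤ u i) : a ≤ liminf g f := by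
  rw [← hl.liminf_eq]
  exact liminf_le_liminf hlg hl.isBoundedUnder_ge
    (hu.isBoundedUnder_le.mono_le hgu).isCoboundedUnder_flip

theorem tendsto_min_of_tendsto_nhdsLT {α β : Type*} [LinearOrder α] [TopologicalSpace α]
    [TopologicalSpace β] {Y : α → β} {a : ℕ → α} {s t : α} {L : β}
    (hY : Tendsto Y (𝓝[<] s) (𝓝 L)) (ha : Tendsto a atTop (𝓝 s)) (has : ∀ n, a n < s)
    (hst : s ≤ t) : Tendsto (fun n => Y (min (a n) t)) atTop (𝓝 L) := by
  have hmin : ∀ n, min (a n) t = a n := fun n => min_eq_left ((has n).le.trans hst)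
  simp only [hmin]
  exact hY.comp (tendsto_nhdsWithin_iff.mpr ⟨ha, .of_forall has⟩)

def flashGain (ξ : ℕ → ℝ) (σ τ : ℕ → ℝ≥0) (Y : ℝ≥0 → ℝ) (t : ℝ≥0) (n : ℕ) : ℝ :=
  ξ n * (Y (min (τ n) t) - Y (min (σ n) t))

section FlashGain

variable {ξ : ℕ → ℝ} {σ τ : ℕ → ℝ≥0} {Y Y' : ℝ≥0 → ℝ} {t : ℝ≥0}

theorem flashGain_mem_Icc {r δ k : ℝ} {n : ℕ} (hδ : r - r⁻¹ ≤ δ) (hY : ∀ u, 0 ≤ Y u)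
    (hξ : |ξ n| ≤ k) (hclose : ∀ u, Y' u ∈ Icc (r⁻¹ * Y u) (r * Y u)) :
    flashGain ξ σ τ Y' t n ∈
      Icc (min (r⁻¹ * flashGain ξ σ τ Y t n) (r * flashGain ξ σ τ Y t n)
            - δ * k * Y (min (σ n) t))
        (max (r⁻¹ * flashGain ξ σ τ Y t n) (r * flashGain ξ σ τ Y t n)
            + δ * k * Y (min (σ n) t)) := by
  have hlow := min_sub_le_mul_sub_of_mem_Icc hδ (hY _) hξ (hclose (min (σ n) t))
    (hclose (min (τ n) t))
  have hup := min_sub_le_mul_sub_of_mem_Icc (ξ := -ξ n) hδ (hY _) ((abs_neg (ξ n)).trans_le hξ)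
    (hclose (min (σ n) t)) (hclose (min (τ n) t))
  simp only [neg_mul, mul_neg, min_neg_neg] at hup
  exact ⟨hlow, by rw [flashGain, flashGain]; linarith⟩

theorem le_liminf_flashGain {r δ k c L : ℝ} {s : ℝ≥0} (hr : 1 ≤ r) (hδ : r - r⁻¹ ≤ δ)
    (hY : ∀ u, 0 ≤ Y u) (hclose : ∀ u, Y' u ∈ Icc (r⁻¹ * Y u) (r * Y u)) (hξ : ∀ n, |ξ n| ≤ k)
    (hc : 0 ≤ c) (hL : Tendsto Y (𝓝[<] s) (𝓝 L)) (hσ : Tendsto σ atTop (𝓝 s))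
    (hσs : ∀ n, σ n < s) (hst : s ≤ t) (hgain : Tendsto (flashGain ξ σ τ Y t) atTop (𝓝 c)) :
    r⁻¹ * c - δ * k * L ≤ liminf (flashGain ξ σ τ Y' t) atTop := by
  have hYσ := tendsto_min_of_tendsto_nhdsLT hL hσ hσs hst
  have hmin : min (r⁻¹ * c) (r * c) = r⁻¹ * c :=
    min_eq_left (mul_le_mul_of_nonneg_right ((inv_le_one_of_one_le₀ hr).trans hr) hc)
  rw [← hmin]
  exact le_liminf_of_tendsto_of_le_of_le
    (((hgain.const_mul _).min (hgain.const_mul _)).sub (hYσ.const_mul _))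
    (((hgain.const_mul _).max (hgain.const_mul _)).add (hYσ.const_mul _))
    (.of_forall fun n => (flashGain_mem_Icc hδ hY (hξ n) hclose).1)
    (.of_forall fun n => (flashGain_mem_Icc hδ hY (hξ n) hclose).2)

theorem tendsto_flashGain_zero_of_lt {T : ℝ≥0∞}
    (hσ : Tendsto (fun n => (σ n : ℝ≥0∞)) atTop (𝓝 T)) (hστ : ∀ n, σ n ≤ τ n)
    (htT : (t : ℝ≥0∞) < T) : Tendsto (flashGain ξ σ τ Y t) atTop (𝓝 0) := by
  refine tendsto_const_nhds.congr' ?_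
  filter_upwards [hσ.eventually (eventually_gt_nhds htT)] with n hn
  have htσ : t ≤ σ n := (ENNReal.coe_lt_coe.mp hn).le
  rw [flashGain, min_eq_right htσ, min_eq_right (htσ.trans (hστ n)), sub_self, mul_zero]

end FlashGain

theorem stmt8_general
    {Ω : Type*} {m : MeasurableSpace Ω} {P : Measure Ω}
    (X Xt Xm : ℝ≥0 → Ω → ℝ)
    (hXpos : ∀ t : ℝ≥0, ∀ ω, 0 < X t ω)
    (hll : ∀ ω, ∀ t : ℝ≥0, 0 < t → Tendsto (fun s => X s ω) (𝓝[<] t) (𝓝 (Xm t ω)))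
    -- `ε`-closeness (proportional transaction costs of size `ε`)
    (ε : ℝ) (hε : 0 < ε)
    (hclose : ∀ᵐ ω ∂P, ∀ t : ℝ≥0,
      1 / (1 + ε) ≤ Xt t ω / X t ω ∧ Xt t ω / X t ω ≤ 1 + ε)
    (τ : Ω → ℝ≥0∞)
    (σ τ' : ℕ → Ω → ℝ≥0)
    (hle : ∀ n, ∀ ω, σ n ω ≤ τ' n ω)
    (hσlim : ∀ᵐ ω ∂P, Tendsto (fun n => (σ n ω : ℝ≥0∞)) atTop (𝓝 (τ ω)))
    (hσlt : ∀ᵐ ω ∂P, τ ω < ∞ → ∀ n, (σ n ω : ℝ≥0∞) < τ ω)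
    (ξ : ℕ → Ω → ℝ)
    (k : ℝ) (hξbdd : ∀ᵐ ω ∂P, ∀ n, |ξ n ω| ≤ k)
    (c : ℝ) (hc : 0 < c)
    (hgains : ∀ᵐ ω ∂P, ∀ t : ℝ≥0,
      Tendsto (fun n =>
          ξ n ω * (X (min (τ' n ω) t) ω - X (min (σ n ω) t) ω)) atTop
        (𝓝 (if τ ω ≤ (t : ℝ≥0∞) then c else 0)))
    (N : ℝ)
    (hXm : ∀ᵐ ω ∂P, τ ω < ∞ → Xm (τ ω).toNNReal ω ≤ N) :
    ∀ᵐ ω ∂P, ∀ t : ℝ≥0,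
      ((c / (1 + ε) - 2 * ε * k * N) * (if τ ω ≤ (t : ℝ≥0∞) then (1 : ℝ) else 0)
        ≤ Filter.liminf (fun n =>
            ξ n ω * (Xt (min (τ' n ω) t) ω - Xt (min (σ n ω) t) ω)) atTop) ∧
      ((t : ℝ≥0∞) < τ ω →
        Tendsto (fun n =>
            ξ n ω * (Xt (min (τ' n ω) t) ω - Xt (min (σ n ω) t) ω)) atTop
          (𝓝 (0 : ℝ))) := by
  filter_upwards [hclose, hσlim, hσlt, hξbdd, hgains, hXm] with ω hXt hσ hστ hξ hgain hXmN t
  rcases le_or_gt (τ ω) t with hτt | htτ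
  · have hτfin : τ ω < ∞ := hτt.trans_lt ENNReal.coe_lt_top
    lift τ ω to ℝ≥0 using hτfin.ne with s
    have hσs : ∀ n, σ n ω < s := fun n => ENNReal.coe_lt_coe.mp (hστ hτfin n)
    have hk : 0 ≤ k := (abs_nonneg _).trans (hξ 0)
    have hgain_t := hgain t
    rw [if_pos hτt] at hgain_t
    refine ⟨?_, fun htτ => absurd hτt htτ.not_ge⟩
    rw [if_pos hτt, mul_one, div_eq_inv_mul]
    calc (1 + ε)⁻¹ * c - 2 * ε * k * N ≤ (1 + ε)⁻¹ * c - 2 * ε * k * Xm s ω := by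
          gcongr
          simpa using hXmN hτfin
      _ ≤ _ := le_liminf_flashGain (Y := (X · ω)) (by linarith) (one_add_sub_inv_le hε.le)
          (fun u => (hXpos u ω).le) (fun u => mem_Icc_of_div_mem_Icc (hXpos u ω) (hXt u))
          hξ hc.le (hll ω s ((hσs 0).trans_le' zero_le)) (ENNReal.tendsto_coe.mp hσ) hσs
          (ENNReal.coe_le_coe.mp hτt) hgain_t
  · have h0 := tendsto_flashGain_zero_of_lt (ξ := (ξ · ω)) (τ := (τ' · ω)) (Y := (Xt · ω)) hσ
      (fun n => hle n ω) htτ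
    exact ⟨by rw [if_neg htτ.not_ge, mul_zero]; exact h0.liminf_eq.ge, fun _ => h0⟩

/-- Constant profits via flash strategies are robust to small
proportional transaction costs: if `X̃` is `ε`-close to the strictly positive
càdlàg process `X`, the flash strategy `(ξₙ, σₙ, τₙ)` generates a constant profit
`c > 0` at `τ` under `X`, and `X_{τ-} ≤ N` a.s. on `{τ<∞}`, then a.s. for every
`t ≥ 0` the gains under `X̃` satisfy
`liminfₙ ξₙ·(X̃_{τₙ∧t} - X̃_{σₙ∧t}) ≥ (c/(1+ε) - 2εkN)·1_{τ≤t}`, and on `{τ>t}`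
they converge to `0`. -/
theorem stmt8
    {Ω : Type*} {m : MeasurableSpace Ω} {P : Measure Ω} [IsProbabilityMeasure P]
    (F : Filtration ℝ≥0 m)
    (X Xt Xm : ℝ≥0 → Ω → ℝ)
    (hXpos : ∀ t : ℝ≥0, ∀ ω, 0 < X t ω)
    (hXtpos : ∀ t : ℝ≥0, ∀ ω, 0 < Xt t ω)
    -- càdlàg paths of `X`: right-continuity and existence of left limits `Xm`
    (hrc : ∀ ω, ∀ t : ℝ≥0, Tendsto (fun s => X s ω) (𝓝[>] t) (𝓝 (X t ω)))
    (hll : ∀ ω, ∀ t : ℝ≥0, 0 < t → Tendsto (fun s => X s ω) (𝓝[<] t) (𝓝 (Xm t ω)))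
    -- `ε`-closeness (proportional transaction costs of size `ε`)
    (ε : ℝ) (hε : 0 < ε)
    (hclose : ∀ᵐ ω ∂P, ∀ t : ℝ≥0,
      1 / (1 + ε) ≤ Xt t ω / X t ω ∧ Xt t ω / X t ω ≤ 1 + ε)
    (τ : Ω → ℝ≥0∞) (hτ : Measurable τ)
    (σ τ' : ℕ → Ω → ℝ≥0)
    (hσ : ∀ n, IsStoppingTime F (fun ω => (σ n ω : WithTop ℝ≥0)))
    (hτ' : ∀ n, IsStoppingTime F (fun ω => (τ' n ω : WithTop ℝ≥0)))
    (hσbdd : ∀ n, ∃ C : ℝ≥0, ∀ ω, σ n ω ≤ C)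
    (hτ'bdd : ∀ n, ∃ C : ℝ≥0, ∀ ω, τ' n ω ≤ C)
    (hle : ∀ n, ∀ ω, σ n ω ≤ τ' n ω)
    (hσmono : ∀ n, ∀ ω, σ n ω ≤ σ (n + 1) ω)
    (hσlim : ∀ᵐ ω ∂P, Tendsto (fun n => (σ n ω : ℝ≥0∞)) atTop (𝓝 (τ ω)))
    (hτ'lim : ∀ᵐ ω ∂P, Tendsto (fun n => (τ' n ω : ℝ≥0∞)) atTop (𝓝 (τ ω)))
    (hσlt : ∀ᵐ ω ∂P, τ ω < ∞ → ∀ n, (σ n ω : ℝ≥0∞) < τ ω)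
    (ξ : ℕ → Ω → ℝ) (hξmeas : ∀ n, Measurable[(hσ n).measurableSpace] (ξ n))
    (k : ℝ) (hξbdd : ∀ᵐ ω ∂P, ∀ n, |ξ n ω| ≤ k)
    (ξ' : Ω → ℝ) (hξlim : ∀ᵐ ω ∂P, Tendsto (fun n => ξ n ω) atTop (𝓝 (ξ' ω)))
    (c : ℝ) (hc : 0 < c)
    (hgains : ∀ᵐ ω ∂P, ∀ t : ℝ≥0,
      Tendsto (fun n =>
          ξ n ω * (X (min (τ' n ω) t) ω - X (min (σ n ω) t) ω)) atTop
        (𝓝 (if τ ω ≤ (t : ℝ≥0∞) then c else 0)))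
    (N : ℝ) (hN : 0 < N)
    (hXm : ∀ᵐ ω ∂P, τ ω < ∞ → Xm (τ ω).toNNReal ω ≤ N) :
    ∀ᵐ ω ∂P, ∀ t : ℝ≥0,
      ((c / (1 + ε) - 2 * ε * k * N) * (if τ ω ≤ (t : ℝ≥0∞) then (1 : ℝ) else 0)
        ≤ Filter.liminf (fun n =>
            ξ n ω * (Xt (min (τ' n ω) t) ω - Xt (min (σ n ω) t) ω)) atTop) ∧
      ((t : ℝ≥0∞) < τ ω →
        Tendsto (fun n =>
            ξ n ω * (Xt (min (τ' n ω) t) ω - Xt (min (σ n ω) t) ω)) atTop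
          (𝓝 (0 : ℝ))) :=
  stmt8_general (m := m) X Xt Xm hXpos hll ε hε hclose τ σ τ' hle hσlim hσlt ξ k hξbdd c hc hgains N
    hXm
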